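/- Let G be a preordered topological abelian group whose positive cone G₊ has an order unit u, and let μ be a compactly supported finite Radon measure on G. Then there exists a finitely supported measure σ on G (a finite nonnegative linear combination of Dirac measures) with σ(G) = μ(G) such that μ ∗ δ_{−2u} ≤ σ and σ ≤ μ ∗ δ_{2u} in the stochastic preorder. -/

import Mathlib

/-!
Cover the compact support of `μ` by finitely many translates `x - [-u, u]°` and let `φ` send
each point to the centre of a translate containing it, chosen by a fixed priority among the
centres so that `φ` is measurable. Then `φ` has finite range, `σ := μ.map φ` is finitely
supported, and `y - u ≤ φ y ≤ y + u` holds `μ`-a.e. Since `u ≥ 0`, the maps `y ↦ y - 2u`, `φ`,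
`y ↦ y + 2u` are pointwise ordered a.e., and pushing `μ` forward along pointwise ordered maps is
monotone for the stochastic preorder.
-/

open MeasureTheory Filter

/-- The support of a measure: the set of points all of whose open neighbourhoods have
positive measure. -/
def msupport {X : Type*} [TopologicalSpace X] [MeasurableSpace X] (μ : Measure X) : Set X :=
  {x | ∀ U : Set X, IsOpen U → x ∈ U → 0 < μ U}

/-- The stochastic preorder on measures of equal total mass, with respect to the positive
cone `P`: comparison on all closed upward closed sets. -/
def StochLE {G : Type*} [AddCommGroup G] [TopologicalSpace G] [MeasurableSpace G]
    (P : Set G) (μ ν : Measure G) : Prop :=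
  μ Set.univ = ν Set.univ ∧
    ∀ C : Set G, IsClosed C → (∀ x ∈ C, ∀ g ∈ P, x + g ∈ C) → μ C ≤ ν C

lemma msupport_eq_support {X : Type*} [TopologicalSpace X] [MeasurableSpace X]
    (μ : Measure X) : msupport μ = μ.support := by
  rw [Measure.support_eq_forall_isOpen]
  ext x
  exact forall_congr' fun U => forall_comm

lemma MeasureTheory.Measure.map_eq_finset_sum_smul_dirac {α β : Type*} [MeasurableSpace α]
    [MeasurableSpace β] [MeasurableSingletonClass β] (μ : Measure α) {f : α → β}
    (hf : Measurable f) (s : Finset β) (hs : ∀ a, f a ∈ s) :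
    μ.map f = ∑ b ∈ s, μ (f ⁻¹' {b}) • Measure.dirac b := by
  classical
  ext C hC
  have hfiber : f ⁻¹' C = ⋃ b ∈ s.filter (· ∈ C), f ⁻¹' {b} := by
    ext a
    simp [hs a]
  rw [Measure.map_apply hf hC, Measure.finsetSum_apply, hfiber,
    measure_biUnion_finset (fun b _ b' _ hbb' => (Set.disjoint_singleton.2 hbb').preimage f)
      (fun b _ => hf (measurableSet_singleton b)), Finset.sum_filter]
  refine Finset.sum_congr rfl fun b _ => ?_
  by_cases hb : b ∈ C <;> simp [Measure.dirac_apply' _ hC, hb]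

/-- `Measure.conv_dirac` needs `MeasurableAdd₂ G`, which fails for Borel σ-algebras of
non-second-countable groups; measurable singletons suffice here. -/
lemma conv_dirac_eq_map {G : Type*} [AddCommGroup G] [MeasurableSpace G] [MeasurableAdd G]
    [MeasurableSingletonClass G] (μ : Measure G) [SFinite μ] (c : G) :
    μ.conv (Measure.dirac c) = μ.map (· + c) := by
  have hc : ∀ᵐ p ∂μ.map (·, c), p.2 = c :=
    (ae_map_iff measurable_prodMk_right.aemeasurable
      (measurable_snd (measurableSet_singleton c))).2 (ae_of_all _ fun _ => rfl)
  rw [Measure.conv, Measure.prod_dirac,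
    Measure.map_congr (hc.mono fun p hp => by simp only [hp] :
      (fun p : G × G => p.1 + p.2) =ᵐ[_] fun p => p.1 + c),
    Measure.map_map (by fun_prop) measurable_prodMk_right]
  rfl

lemma exists_measurable_selector {α β : Type*} [MeasurableSpace α] [MeasurableSpace β] (b₀ : β)
    (t : Finset β) {U : β → Set α} (hU : ∀ b ∈ t, MeasurableSet (U b)) :
    ∃ φ : α → β, Measurable φ ∧ (∀ a, φ a ∈ insert b₀ (t : Set β)) ∧
      ∀ a ∈ ⋃ b ∈ t, U b, a ∈ U (φ a) := by
  classical
  induction t using Finset.induction_on with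
  | empty => exact ⟨fun _ => b₀, measurable_const, by simp, by simp⟩
  | insert b t _ ih =>
    obtain ⟨φ, hφ, hφt, hφU⟩ := ih fun b' hb' => hU b' (Finset.mem_insert_of_mem hb')
    refine ⟨(U b).piecewise (fun _ => b) φ,
      Measurable.piecewise (hU b (Finset.mem_insert_self b t)) measurable_const hφ, fun a => ?_, ?_⟩
    · by_cases ha : a ∈ U b
      · simp [ha]
      · rw [Set.piecewise_eq_of_notMem _ _ _ ha]
        exact Set.insert_subset_insert (Finset.coe_subset.2 (Finset.subset_insert b t)) (hφt a)
    · intro a ha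
      by_cases hab : a ∈ U b
      · rwa [Set.piecewise_eq_of_mem _ _ _ hab]
      · rw [Set.piecewise_eq_of_notMem _ _ _ hab]
        obtain ⟨b', hb', hab'⟩ := Set.mem_iUnion₂.1 ha
        rcases Finset.mem_insert.1 hb' with rfl | hb'
        · exact absurd hab' hab
        · exact hφU a (Set.mem_biUnion hb' hab')

lemma IsCompact.exists_measurable_finset_valued_sub_mem {G : Type*} [AddGroup G]
    [TopologicalSpace G] [IsTopologicalAddGroup G] [MeasurableSpace G] [OpensMeasurableSpace G]
    {K V : Set G} (hK : IsCompact K) (hV : V ∈ nhds 0) :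
    ∃ (s : Finset G) (φ : G → G), Measurable φ ∧ (∀ y, φ y ∈ s) ∧ ∀ y ∈ K, φ y - y ∈ V := by
  classical
  let U : G → Set G := fun x => (x - ·) ⁻¹' interior V
  have hUo (x : G) : IsOpen (U x) := isOpen_interior.preimage (continuous_sub_left x)
  have hcover : K ⊆ ⋃ x, U x := fun y _ =>
    Set.mem_iUnion.2 ⟨y, by simpa [U] using mem_interior_iff_mem_nhds.2 hV⟩
  obtain ⟨t, ht⟩ := hK.elim_finite_subcover U hUo hcover
  obtain ⟨φ, hφ, hφt, hφU⟩ := exists_measurable_selector 0 t fun x _ => (hUo x).measurableSet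
  refine ⟨insert 0 t, φ, hφ, fun y => by simpa using hφt y, fun y hy => ?_⟩
  exact interior_subset (hφU y (ht hy))

lemma stochLE_map_of_ae_sub_mem {G : Type*} [AddCommGroup G] [TopologicalSpace G]
    [MeasurableSpace G] [OpensMeasurableSpace G] (P : Set G) (μ : Measure G) {ψ φ : G → G}
    (hψ : Measurable ψ) (hφ : Measurable φ) (h : ∀ᵐ y ∂μ, φ y - ψ y ∈ P) :
    StochLE P (μ.map ψ) (μ.map φ) := by
  refine ⟨by rw [Measure.map_apply hψ .univ, Measure.map_apply hφ .univ]; rfl,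
    fun C hC hCup => ?_⟩
  rw [Measure.map_apply hψ hC.measurableSet, Measure.map_apply hφ hC.measurableSet]
  refine measure_mono_ae (h.mono fun y hy (hyC : ψ y ∈ C) => show φ y ∈ C from ?_)
  simpa using hCup _ hyC _ hy

theorem finitely_supported_in_order_interval_general
    {G : Type*} [AddCommGroup G] [TopologicalSpace G] [IsTopologicalAddGroup G] [T2Space G]
    [MeasurableSpace G] [BorelSpace G]
    (P : Set G) (hPadd : ∀ x ∈ P, ∀ y ∈ P, x + y ∈ P)
    (u : G) (huP : u ∈ P)
    (hnbhd : {x : G | x + u ∈ P ∧ u - x ∈ P} ∈ nhds (0 : G))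
    (μ : Measure G) [IsFiniteMeasure μ] (hμR : μ.InnerRegular)
    (hμc : IsCompact (msupport μ)) :
    ∃ σ : Measure G,
      (∃ (s : Finset G) (w : G → NNReal),
          σ = ∑ x ∈ s, ((w x : ENNReal) • Measure.dirac x)) ∧
      σ Set.univ = μ Set.univ ∧
      StochLE P (μ.conv (Measure.dirac (-((2 : ℕ) • u)))) σ ∧
      StochLE P σ (μ.conv (Measure.dirac ((2 : ℕ) • u))) := by
  obtain ⟨s, φ, hφ, hφs, hφK⟩ := hμc.exists_measurable_finset_valued_sub_mem hnbhd
  have : μ.InnerRegular := hμR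
  have hK : ∀ᵐ y ∂μ, y ∈ msupport μ := by
    rw [msupport_eq_support]
    exact Measure.support_mem_ae_of_innerRegular
  have hσ := μ.map_eq_finset_sum_smul_dirac hφ s hφs
  refine ⟨μ.map φ, ⟨s, fun x => (μ (φ ⁻¹' {x})).toNNReal, ?_⟩, ?_, ?_, ?_⟩
  · simp_rw [hσ, ENNReal.coe_toNNReal (measure_ne_top μ _)]
  · rw [Measure.map_apply hφ .univ, Set.preimage_univ]
  · rw [conv_dirac_eq_map]
    refine stochLE_map_of_ae_sub_mem P μ (measurable_add_const _) hφ (hK.mono fun y hy => ?_)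
    obtain ⟨h, -⟩ := hφK y hy
    convert hPadd _ h _ huP using 1
    rw [two_nsmul]; abel
  · rw [conv_dirac_eq_map]
    refine stochLE_map_of_ae_sub_mem P μ hφ (measurable_add_const _) (hK.mono fun y hy => ?_)
    obtain ⟨-, h⟩ := hφK y hy
    convert hPadd _ h _ huP using 1
    rw [two_nsmul]; abel

/-- Finite approximation: for a compactly supported finite Radon measure `μ` on a preordered
topological abelian group with order unit `u`, the order interval
`[μ ∗ δ_{-2u}, μ ∗ δ_{2u}]` for the stochastic preorder contains a finitely supported measure
of the same total mass. -/
theorem finitely_supported_in_order_interval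
    {G : Type*} [AddCommGroup G] [TopologicalSpace G] [IsTopologicalAddGroup G] [T2Space G]
    [MeasurableSpace G] [BorelSpace G]
    (P : Set G) (hPclosed : IsClosed P) (hPadd : ∀ x ∈ P, ∀ y ∈ P, x + y ∈ P)
    (hP0 : (0 : G) ∈ P)
    (u : G) (huP : u ∈ P)
    (harch : ∀ x : G, ∃ k : ℕ, k • u - x ∈ P)
    (hnbhd : {x : G | x + u ∈ P ∧ u - x ∈ P} ∈ nhds (0 : G))
    (μ : Measure G) [IsFiniteMeasure μ] (hμR : μ.InnerRegular)
    (hμc : IsCompact (msupport μ)) :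
    ∃ σ : Measure G,
      (∃ (s : Finset G) (w : G → NNReal),
          σ = ∑ x ∈ s, ((w x : ENNReal) • Measure.dirac x)) ∧
      σ Set.univ = μ Set.univ ∧
      StochLE P (μ.conv (Measure.dirac (-((2 : ℕ) • u)))) σ ∧
      StochLE P σ (μ.conv (Measure.dirac ((2 : ℕ) • u))) :=
  finitely_supported_in_order_interval_general P hPadd u huP hnbhd μ hμR hμc
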